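/- Fix α ∈ (1/2, 1), C ∈ ℝ and K > e^{C/2}, and for n ≥ 2 set R_n = 2 ln n + C and r'_n = ln(K·n) (so that r'_n > R_n/2 for all n). Then there exist constants 0 < c ≤ c' and N such that for all n ≥ N, c · n^{1−α} ≤ n · J(r'_n, R_n) ≤ c' · n^{1−α}, where J(r, R) = (1/(2π)) ∫_0^{2π} ∫_0^{min(r,R)} 1[cosh r · cosh s − sinh r · sinh s · cos φ ≤ cosh R] · (α sinh(α s)/(cosh(α R) − 1)) ds dφ. (In the hyperbolic random graph model, the expected inner degree of a vertex with radial coordinate r'_n is of order n^{1−α}.) -/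

import Mathlib

/-- `hrgJ α r R` is the probability measure `μ(B_r(R) ∩ B_0(r))` in the hyperbolic
random graph model: the probability that a vertex sampled in the disk of radius `R`
(with radial density `α sinh(α s)/(cosh(α R) - 1)` and uniform angle) has radial
coordinate at most `r` and lies within hyperbolic distance `R` of the point `(r, 0)`. -/
noncomputable def hrgJ (α r R : ℝ) : ℝ :=
  (1 / (2 * Real.pi)) * ∫ φ in (0 : ℝ)..(2 * Real.pi), ∫ s in (0 : ℝ)..(min r R),
    if Real.cosh r * Real.cosh s - Real.sinh r * Real.sinh s * Real.cos φ ≤ Real.cosh R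
    then α * Real.sinh (α * s) / (Real.cosh (α * R) - 1) else 0

/-!
By the hyperbolic law of cosines the point `(s, φ)` is within distance `r + s` of `(r, 0)`.
Hence, for `R / 2 ≤ r ≤ R`, the whole disc of radius `R - r` counts towards `J(r, R)`, and
`J(r, R)` lies between the radial masses `(cosh (α (R - r)) - 1) / (cosh (α R) - 1)` and
`(cosh (α r) - 1) / (cosh (α R) - 1)` of the discs of radii `R - r` and `r`. Once
`α (R - r) ≥ log 4` these are within a factor `4` of `exp (-α r)` and `exp (α (r - R))`, and
with `r = log (K n)`, `R = 2 log n + C` both are of order `n ^ (-α)`.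
-/

open Real MeasureTheory Set Filter

lemma integral_mul_sinh_mul (α x : ℝ) :
    ∫ s in (0 : ℝ)..x, α * sinh (α * s) = cosh (α * x) - 1 := by
  rw [intervalIntegral.integral_eq_sub_of_hasDerivAt
    (fun s _ => by simpa [mul_comm] using ((hasDerivAt_id s).const_mul α).cosh)
    ((by fun_prop : Continuous fun s => α * sinh (α * s)).intervalIntegrable _ _)]
  simp

lemma cosh_mul_cosh_sub_sinh_mul_sinh_mul_cos_le {r s : ℝ} (hr : 0 ≤ r) (hs : 0 ≤ s)
    (φ : ℝ) :
    cosh r * cosh s - sinh r * sinh s * cos φ ≤ cosh (r + s) := by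
  have := mul_le_mul_of_nonneg_left (neg_one_le_cos φ)
    (mul_nonneg (sinh_nonneg_iff.2 hr) (sinh_nonneg_iff.2 hs))
  rw [cosh_add]
  linarith

lemma exp_div_four_le_cosh_sub_one {x : ℝ} (hx : log 4 ≤ x) : exp x / 4 ≤ cosh x - 1 := by
  have h4 : 4 ≤ exp x := by simpa [exp_log] using exp_le_exp.2 hx
  rw [cosh_eq]
  linarith [exp_pos (-x)]

lemma cosh_le_exp {x : ℝ} (hx : 0 ≤ x) : cosh x ≤ exp x := by
  rw [cosh_eq]
  linarith [exp_le_exp.2 (show -x ≤ x by linarith)]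

lemma exp_sub_div_four_le_div_cosh_sub_one {a b : ℝ} (ha : log 4 ≤ a) (hab : a ≤ b) :
    exp (a - b) / 4 ≤ (cosh a - 1) / (cosh b - 1) := by
  have hb : 0 ≤ b := (log_nonneg (by norm_num)).trans (ha.trans hab)
  rw [exp_sub, div_right_comm]
  have ha4 := exp_div_four_le_cosh_sub_one ha
  have hb4 := exp_div_four_le_cosh_sub_one (ha.trans hab)
  exact div_le_div₀ (by linarith [exp_pos a]) ha4 (by linarith [exp_pos b])
    (by linarith [cosh_le_exp hb])

lemma div_cosh_sub_one_le_four_mul_exp_sub {a b : ℝ} (ha : 0 ≤ a) (hb : log 4 ≤ b) :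
    (cosh a - 1) / (cosh b - 1) ≤ 4 * exp (a - b) := by
  have hb4 := exp_div_four_le_cosh_sub_one hb
  calc (cosh a - 1) / (cosh b - 1) ≤ exp a / (exp b / 4) :=
        div_le_div₀ (exp_pos a).le (by linarith [cosh_le_exp ha]) (by positivity) hb4
    _ = 4 * exp (a - b) := by rw [exp_sub]; ring

lemma Measurable.stronglyMeasurable_intervalIntegral {F : ℝ → ℝ → ℝ}
    (hF : Measurable (Function.uncurry F)) (a b : ℝ) :
    StronglyMeasurable fun x => ∫ y in a..b, F x y :=
  (hF.stronglyMeasurable.integral_prod_right' (ν := volume.restrict (Ioc a b))).sub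
    (hF.stronglyMeasurable.integral_prod_right' (ν := volume.restrict (Ioc b a)))

lemma one_div_mul_intervalIntegral_mem_Icc {F : ℝ → ℝ} {T a b : ℝ} (hT : 0 < T)
    (hF : AEStronglyMeasurable F) (ha : ∀ x, a ≤ F x) (hb : ∀ x, F x ≤ b) :
    1 / T * ∫ x in (0 : ℝ)..T, F x ∈ Icc a b := by
  have hint : IntervalIntegrable F volume 0 T :=
    (intervalIntegrable_const (c := max |a| |b|)).mono_fun hF.restrict
      (ae_of_all _ fun x => (abs_le_max_abs_abs (ha x) (hb x)).trans (le_abs_self _))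
  have hlo :=
    intervalIntegral.integral_mono_on hT.le intervalIntegrable_const hint fun x _ => ha x
  have hhi :=
    intervalIntegral.integral_mono_on hT.le hint intervalIntegrable_const fun x _ => hb x
  simp only [intervalIntegral.integral_const, smul_eq_mul, sub_zero] at hlo hhi
  rw [one_div, inv_mul_eq_div]
  exact ⟨(le_div_iff₀ hT).2 (by linarith), (div_le_iff₀ hT).2 (by linarith)⟩

noncomputable def hrgDensity (α R s : ℝ) : ℝ := α * sinh (α * s) / (cosh (α * R) - 1)

noncomputable def hrgIntegrand (α r R φ s : ℝ) : ℝ :=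
  if cosh r * cosh s - sinh r * sinh s * cos φ ≤ cosh R then hrgDensity α R s else 0

lemma hrgJ_eq (α r R : ℝ) :
    hrgJ α r R = 1 / (2 * π) * ∫ φ in (0 : ℝ)..(2 * π), ∫ s in (0 : ℝ)..(min r R),
      hrgIntegrand α r R φ s := rfl

section

variable {α r R : ℝ}

lemma hrgDensity_nonneg (hα : 0 ≤ α) {s : ℝ} (hs : 0 ≤ s) : 0 ≤ hrgDensity α R s :=
  div_nonneg (mul_nonneg hα (sinh_nonneg_iff.2 (mul_nonneg hα hs)))
    (sub_nonneg.2 (one_le_cosh _))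

lemma continuous_hrgDensity : Continuous (hrgDensity α R) := by
  unfold hrgDensity; fun_prop

lemma integral_hrgDensity (x : ℝ) :
    ∫ s in (0 : ℝ)..x, hrgDensity α R s = (cosh (α * x) - 1) / (cosh (α * R) - 1) := by
  simp only [hrgDensity]
  rw [intervalIntegral.integral_div, integral_mul_sinh_mul]

lemma measurable_hrgIntegrand : Measurable (Function.uncurry (hrgIntegrand α r R)) := by
  exact Measurable.ite (measurableSet_le (by fun_prop) measurable_const)
    (continuous_hrgDensity.measurable.comp measurable_snd) measurable_const

lemma norm_hrgIntegrand_le (φ s : ℝ) :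
    ‖hrgIntegrand α r R φ s‖ ≤ ‖hrgDensity α R s‖ := by
  unfold hrgIntegrand; split_ifs <;> simp

lemma intervalIntegrable_hrgIntegrand (φ a b : ℝ) :
    IntervalIntegrable (hrgIntegrand α r R φ) volume a b :=
  (continuous_hrgDensity.intervalIntegrable a b).mono_fun
    (measurable_hrgIntegrand.comp measurable_prodMk_left).aestronglyMeasurable
    (ae_of_all _ (norm_hrgIntegrand_le φ))

lemma hrgIntegrand_nonneg (hα : 0 ≤ α) (φ : ℝ) {s : ℝ} (hs : 0 ≤ s) :
    0 ≤ hrgIntegrand α r R φ s := by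
  unfold hrgIntegrand; split_ifs <;> simp [hrgDensity_nonneg hα hs]

lemma hrgIntegrand_le (hα : 0 ≤ α) (φ : ℝ) {s : ℝ} (hs : 0 ≤ s) :
    hrgIntegrand α r R φ s ≤ hrgDensity α R s := by
  unfold hrgIntegrand; split_ifs <;> simp [hrgDensity_nonneg hα hs]

lemma hrgIntegrand_eq_hrgDensity (hr : 0 ≤ r) (φ : ℝ) {s : ℝ} (hs : 0 ≤ s)
    (hrs : r + s ≤ R) :
    hrgIntegrand α r R φ s = hrgDensity α R s := by
  refine if_pos ((cosh_mul_cosh_sub_sinh_mul_sinh_mul_cos_le hr hs φ).trans ?_)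
  rw [cosh_le_cosh, abs_of_nonneg (by linarith), abs_of_nonneg (by linarith)]
  exact hrs

lemma le_integral_hrgIntegrand (hα : 0 ≤ α) (hRr : 0 ≤ R - r) (hrR : R - r ≤ r) (φ : ℝ) :
    (cosh (α * (R - r)) - 1) / (cosh (α * R) - 1) ≤
      ∫ s in (0 : ℝ)..r, hrgIntegrand α r R φ s := by
  have hr : 0 ≤ r := hRr.trans hrR
  have hnear : ∫ s in (0 : ℝ)..(R - r), hrgIntegrand α r R φ s
      = ∫ s in (0 : ℝ)..(R - r), hrgDensity α R s :=
    intervalIntegral.integral_congr fun s hs => by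
      rw [uIcc_of_le hRr] at hs
      exact hrgIntegrand_eq_hrgDensity hr φ hs.1 (by linarith [hs.2])
  have hfar : 0 ≤ ∫ s in (R - r)..r, hrgIntegrand α r R φ s :=
    intervalIntegral.integral_nonneg hrR fun s hs => hrgIntegrand_nonneg hα φ (hRr.trans hs.1)
  rw [← intervalIntegral.integral_add_adjacent_intervals
    (intervalIntegrable_hrgIntegrand φ 0 (R - r)) (intervalIntegrable_hrgIntegrand φ (R - r) r),
    hnear, integral_hrgDensity]
  linarith

lemma integral_hrgIntegrand_le (hα : 0 ≤ α) (hr : 0 ≤ r) (φ : ℝ) :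
    ∫ s in (0 : ℝ)..r, hrgIntegrand α r R φ s ≤
      (cosh (α * r) - 1) / (cosh (α * R) - 1) := by
  rw [← integral_hrgDensity]
  exact intervalIntegral.integral_mono_on hr (intervalIntegrable_hrgIntegrand φ 0 r)
    (continuous_hrgDensity.intervalIntegrable 0 r) fun s hs => hrgIntegrand_le hα φ hs.1

lemma hrgJ_mem_Icc (hα : 0 ≤ α) (hRr : 0 ≤ R - r) (hrR : R - r ≤ r) :
    hrgJ α r R ∈ Icc ((cosh (α * (R - r)) - 1) / (cosh (α * R) - 1))
      ((cosh (α * r) - 1) / (cosh (α * R) - 1)) := by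
  rw [hrgJ_eq, min_eq_left (by linarith)]
  exact one_div_mul_intervalIntegral_mem_Icc two_pi_pos
    (measurable_hrgIntegrand.stronglyMeasurable_intervalIntegral 0 r).aestronglyMeasurable
    (le_integral_hrgIntegrand hα hRr hrR) (integral_hrgIntegrand_le hα (hRr.trans hrR))

lemma hrgJ_mem_Icc_exp (hα : 0 ≤ α) (h4 : log 4 ≤ α * (R - r)) (hrR : R - r ≤ r) :
    hrgJ α r R ∈ Icc (exp (-(α * r)) / 4) (4 * exp (α * (r - R))) := by
  have hRr : 0 ≤ R - r := (pos_of_mul_pos_right ((log_pos (by norm_num)).trans_le h4) hα).le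
  have hαr : 0 ≤ α * r := mul_nonneg hα (hRr.trans hrR)
  obtain ⟨hlo, hhi⟩ := hrgJ_mem_Icc hα hRr hrR
  have hlo' := exp_sub_div_four_le_div_cosh_sub_one h4 (show α * (R - r) ≤ α * R by linarith)
  have hhi' := div_cosh_sub_one_le_four_mul_exp_sub hαr (show log 4 ≤ α * R by linarith)
  rw [show α * (R - r) - α * R = -(α * r) by ring] at hlo'
  rw [show α * r - α * R = α * (r - R) by ring] at hhi'
  exact ⟨hlo'.trans hlo, hhi.trans hhi'⟩

end

lemma exp_mul_hrgJ_mem_Icc {α C k L : ℝ} (hα : 0 ≤ α) (hCk : C ≤ 2 * k)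
    (hL : log 4 ≤ α * (L + C - k)) :
    exp L * hrgJ α (k + L) (2 * L + C) ∈
      Icc (exp (-(α * k)) / 4 * exp ((1 - α) * L))
        (4 * exp (α * (k - C)) * exp ((1 - α) * L)) := by
  obtain ⟨hlo, hhi⟩ := hrgJ_mem_Icc_exp (r := k + L) (R := 2 * L + C) hα
    (by convert hL using 2; ring) (by linarith)
  have hlo' := mul_le_mul_of_nonneg_left hlo (exp_pos L).le
  have hhi' := mul_le_mul_of_nonneg_left hhi (exp_pos L).le
  refine ⟨le_of_eq_of_le ?_ hlo', hhi'.trans_eq ?_⟩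
  · rw [mul_div_assoc', div_mul_eq_mul_div, ← exp_add, ← exp_add]; ring_nf
  · rw [mul_left_comm, ← exp_add, mul_assoc, ← exp_add]; ring_nf

theorem expected_inner_degree_order_general (α C K : ℝ)
    (hα : 1 / 2 < α) (hK : Real.exp (C / 2) < K) :
    ∃ c c' : ℝ, 0 < c ∧ c ≤ c' ∧ ∃ N : ℕ, ∀ n : ℕ, N ≤ n →
      c * (n : ℝ) ^ (1 - α) ≤
          (n : ℝ) * hrgJ α (Real.log (K * n)) (2 * Real.log n + C) ∧
        (n : ℝ) * hrgJ α (Real.log (K * n)) (2 * Real.log n + C) ≤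
          c' * (n : ℝ) ^ (1 - α) := by
  have hα0 : 0 < α := by linarith
  have hK0 : 0 < K := (exp_pos _).trans hK
  have hCK : C ≤ 2 * log K := by linarith [(lt_log_iff_exp_lt hK0).2 hK]
  have hlarge : ∀ᶠ n : ℕ in atTop, 0 < (n : ℝ) ∧ log 4 / α + log K - C ≤ log n :=
    (tendsto_natCast_atTop_atTop.eventually_gt_atTop 0).and
      ((tendsto_log_atTop.comp tendsto_natCast_atTop_atTop).eventually_ge_atTop _)
  obtain ⟨N, hN⟩ := eventually_atTop.1 hlarge
  refine ⟨exp (-(α * log K)) / 4, 4 * exp (α * (log K - C)), by positivity, ?_, N,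
    fun n hn => ?_⟩
  · calc exp (-(α * log K)) / 4 ≤ exp (α * (log K - C)) / 4 := by gcongr; nlinarith
      _ ≤ 4 * exp (α * (log K - C)) := by linarith [exp_pos (α * (log K - C))]
  obtain ⟨hn0, hlogn⟩ := hN n hn
  have hL : log 4 ≤ α * (log n + C - log K) := by
    rw [mul_comm]; exact (div_le_iff₀ hα0).1 (by linarith)
  have := exp_mul_hrgJ_mem_Icc hα0.le hCK hL
  rwa [exp_log hn0, ← log_mul hK0.ne' hn0.ne', mul_comm (1 - α), ← rpow_def_of_pos hn0] at this

/-- In the hyperbolic random graph model with `R_n = 2 ln n + C`, `K > e^{C/2}` and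
`r'_n = ln(K n)` (so `r'_n > R_n/2`), the expected inner degree `n · J(r'_n, R_n)`
of a vertex with radial coordinate `r'_n` is of order `n^(1-α)`: there are constants
`0 < c ≤ c'` with `c n^(1-α) ≤ n · J(r'_n, R_n) ≤ c' n^(1-α)` for all large `n`. -/
theorem expected_inner_degree_order (α C K : ℝ)
    (hα : 1 / 2 < α) (hα1 : α < 1) (hK : Real.exp (C / 2) < K) :
    ∃ c c' : ℝ, 0 < c ∧ c ≤ c' ∧ ∃ N : ℕ, ∀ n : ℕ, N ≤ n →
      c * (n : ℝ) ^ (1 - α) ≤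
          (n : ℝ) * hrgJ α (Real.log (K * n)) (2 * Real.log n + C) ∧
        (n : ℝ) * hrgJ α (Real.log (K * n)) (2 * Real.log n + C) ≤
          c' * (n : ℝ) ^ (1 - α) :=
  expected_inner_degree_order_general α C K hα hK
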